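/- Let W : ℝ^{n×n} → ℝ be continuous with growth |W(q)| ≤ C(1+|q|^p) and coercivity W(q) ≥ α|q|^p − β (α>0, p ∈ (1,∞)). Let Ω ⊂ ℝ^{n−k} be a bounded measurable set and G : Ω → ℝ^{n×(n−k)} a measurable map with G ∈ L^p. Then there exists a measurable map r₀ : Ω → ℝ^{n×k} with r₀ ∈ L^p(Ω; ℝ^{n×k}) such that for a.e. x ∈ Ω, W(G(x) | r₀(x)) = min_{r ∈ ℝ^{n×k}} W(G(x) | r). -/

import Mathlib

/-!
A Carathéodory integrand `Φ v x` (measurable in `v`, continuous in `x`, with compact sublevel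
sets) on `ℝⁿ = ℝ × ℝⁿ⁻¹` has a measurable selection of minimizers: the least first coordinate
`t v` of a minimizer is measurable, because `t v ≤ a` is a countable condition on approximate
minimizers taken from a countable dense set (Cantor's intersection theorem gives the converse),
and one then minimizes `Φ v (t v, ·)` over `ℝⁿ⁻¹` recursively. For `Φ x r = W (G x | r)` the
coercivity of `W` keeps sublevel sets compact, and
`α ‖r₀‖ ^ p - β ≤ W (G | r₀) ≤ W (G | 0) ≤ C (1 + ‖G‖ ^ p)` puts `r₀` in `L^p`.
-/

open MeasureTheory

/-- Juxtaposition `(q | r)` of blocks into a full matrix (columns `Fin m ⊕ Fin k`). -/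
def juxt (m k : ℕ) (q : Fin (m + k) → Fin m → ℝ) (r : Fin (m + k) → Fin k → ℝ) :
    Fin (m + k) → Fin m ⊕ Fin k → ℝ :=
  fun i => Sum.elim (q i) (r i)

open Set Filter Topology TopologicalSpace

section Minimizers

variable {X : Type*} {f : X → ℝ}

def minimizers (f : X → ℝ) : Set X := {x | ∀ y, f x ≤ f y}

theorem minimizers_eq_sublevel {x₀ : X} (hx₀ : x₀ ∈ minimizers f) :
    minimizers f = {x | f x ≤ f x₀} :=
  Set.ext fun _ => ⟨fun hx => hx x₀, fun hx y => hx.trans (hx₀ y)⟩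

theorem ciInf_eq_of_mem_minimizers [Nonempty X] {x₀ : X} (hx₀ : x₀ ∈ minimizers f) :
    ⨅ x, f x = f x₀ :=
  le_antisymm (ciInf_le ⟨f x₀, forall_mem_range.2 hx₀⟩ x₀) (le_ciInf hx₀)

variable [TopologicalSpace X]

theorem nonempty_minimizers [Nonempty X] (hf : Continuous f)
    (hK : ∀ c, IsCompact {x | f x ≤ c}) : (minimizers f).Nonempty := by
  obtain ⟨x₀⟩ := ‹Nonempty X›
  refine hf.exists_forall_le' x₀ ?_
  filter_upwards [(hK (f x₀)).compl_mem_cocompact] with x hx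
  exact le_of_not_ge hx

theorem isCompact_minimizers [Nonempty X] (hf : Continuous f)
    (hK : ∀ c, IsCompact {x | f x ≤ c}) : IsCompact (minimizers f) := by
  obtain ⟨x₀, hx₀⟩ := nonempty_minimizers hf hK
  exact minimizers_eq_sublevel hx₀ ▸ hK (f x₀)

theorem exists_mem_minimizers_le_iff [Nonempty X] (hf : Continuous f)
    (hK : ∀ c, IsCompact {x | f x ≤ c}) {g : X → ℝ} (hg : Continuous g) {D : Set X}
    (hD : Dense D) (a : ℝ) :
    (∃ x ∈ minimizers f, g x ≤ a) ↔
      ∀ n : ℕ, ∃ q ∈ D, f q < (⨅ x, f x) + 1 / (n + 1) ∧ g q < a + 1 / (n + 1) := by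
  obtain ⟨x₀, hx₀⟩ := nonempty_minimizers hf hK
  rw [ciInf_eq_of_mem_minimizers hx₀]
  constructor
  · rintro ⟨x, hx, hxa⟩ n
    have hε : (0 : ℝ) < 1 / (n + 1) := Nat.one_div_pos_of_nat
    have hU : IsOpen {y | f y < f x₀ + 1 / (n + 1) ∧ g y < a + 1 / (n + 1)} :=
      (isOpen_lt hf continuous_const).inter (isOpen_lt hg continuous_const)
    obtain ⟨q, hqU, hqD⟩ := hD.inter_open_nonempty _ hU ⟨x, by linarith [hx₀ x, hx x₀], by linarith⟩
    exact ⟨q, hqD, hqU⟩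
  · intro h
    set K : ℕ → Set X := fun n => {y | f y ≤ f x₀ + 1 / (n + 1) ∧ g y ≤ a + 1 / (n + 1)}
    have hKanti : ∀ n, K (n + 1) ⊆ K n := by
      intro n y ⟨hy₁, hy₂⟩
      have : (1 : ℝ) / ((n + 1 : ℕ) + 1) ≤ 1 / (n + 1) :=
        one_div_le_one_div_of_le (by positivity) (by push_cast; linarith)
      exact ⟨by linarith, by linarith⟩
    have hKclosed : ∀ n, IsClosed (K n) := fun n =>
      (isClosed_le hf continuous_const).inter (isClosed_le hg continuous_const)
    obtain ⟨y, hy⟩ := IsCompact.nonempty_iInter_of_sequence_nonempty_isCompact_isClosed K hKanti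
      (fun n => let ⟨q, _, hq⟩ := h n; ⟨q, hq.1.le, hq.2.le⟩)
      ((hK _).of_isClosed_subset (hKclosed 0) fun y hy => hy.1) hKclosed
    have le_of_le_add_one_div {u v : ℝ} (h : ∀ n : ℕ, u ≤ v + 1 / (n + 1)) : u ≤ v :=
      le_of_forall_pos_le_add fun ε hε =>
        let ⟨n, hn⟩ := exists_nat_one_div_lt hε
        (h n).trans (by linarith)
    rw [mem_iInter] at hy
    exact ⟨y, fun z => (le_of_le_add_one_div fun n => (hy n).1).trans (hx₀ z),
      le_of_le_add_one_div fun n => (hy n).2⟩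

theorem IsCompact.sInf_image_le_iff {S : Set X}
    (hS : IsCompact S) (hne : S.Nonempty) {g : X → ℝ} (hg : Continuous g) (a : ℝ) :
    sInf (g '' S) ≤ a ↔ ∃ x ∈ S, g x ≤ a := by
  have hgS := hS.image hg
  refine ⟨fun h => ?_, fun ⟨x, hx, hxa⟩ =>
    (csInf_le hgS.bddBelow (mem_image_of_mem g hx)).trans hxa⟩
  obtain ⟨x, hx, hxe⟩ := hgS.sInf_mem (hne.image g)
  exact ⟨x, hx, hxe ▸ h⟩

end Minimizers

section MeasurableMinimizers

variable {V X : Type*} [MeasurableSpace V] [TopologicalSpace X] [SeparableSpace X] [Nonempty X]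
  {Φ : V → X → ℝ}

theorem measurable_iInf_of_isCompact_sublevel (hmeas : ∀ x, Measurable fun v => Φ v x)
    (hcont : ∀ v, Continuous (Φ v)) (hK : ∀ v c, IsCompact {x | Φ v x ≤ c}) :
    Measurable fun v => ⨅ x, Φ v x := by
  obtain ⟨D, hDc, hD⟩ := exists_countable_dense X
  refine measurable_of_Iio fun a => ?_
  have : (fun v => ⨅ x, Φ v x) ⁻¹' Iio a = ⋃ q ∈ D, {v | Φ v q < a} := by
    ext v
    obtain ⟨x₀, hx₀⟩ := nonempty_minimizers (hcont v) (hK v)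
    simp only [mem_preimage, mem_Iio, mem_iUnion, mem_ofPred_eq, ciInf_eq_of_mem_minimizers hx₀,
      exists_prop]
    refine ⟨fun h => ?_, fun ⟨q, _, hq⟩ => (hx₀ q).trans_lt hq⟩
    obtain ⟨q, hq, hqD⟩ := hD.inter_open_nonempty _ (isOpen_lt (hcont v) continuous_const) ⟨x₀, h⟩
    exact ⟨q, hqD, hq⟩
  rw [this]
  exact .biUnion hDc fun q _ => measurableSet_lt (hmeas q) measurable_const

theorem measurable_sInf_image_minimizers (hmeas : ∀ x, Measurable fun v => Φ v x)
    (hcont : ∀ v, Continuous (Φ v)) (hK : ∀ v c, IsCompact {x | Φ v x ≤ c}) {g : X → ℝ}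
    (hg : Continuous g) : Measurable fun v => sInf (g '' minimizers (Φ v)) := by
  obtain ⟨D, hDc, hD⟩ := exists_countable_dense X
  have hm := measurable_iInf_of_isCompact_sublevel hmeas hcont hK
  refine measurable_of_Iic fun a => ?_
  have : (fun v => sInf (g '' minimizers (Φ v))) ⁻¹' Iic a = ⋂ n : ℕ, ⋃ q ∈ D,
      {v | Φ v q < (⨅ x, Φ v x) + 1 / (n + 1) ∧ g q < a + 1 / (n + 1)} := by
    ext v
    simp only [mem_preimage, mem_Iic, mem_iInter, mem_iUnion, mem_ofPred_eq, exists_prop,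
      ← exists_mem_minimizers_le_iff (hcont v) (hK v) hg hD]
    exact (isCompact_minimizers (hcont v) (hK v)).sInf_image_le_iff
      (nonempty_minimizers (hcont v) (hK v)) hg a
  rw [this]
  exact .iInter fun n => .biUnion hDc fun q _ =>
    (measurableSet_lt (hmeas q) (hm.add_const _)).inter (.const _)

end MeasurableMinimizers

universe u

def HasMeasurableMinimizers (X : Type*) [TopologicalSpace X] [MeasurableSpace X] : Prop :=
  ∀ (V : Type u) [MeasurableSpace V] (Φ : V → X → ℝ), (∀ x, Measurable fun v => Φ v x) →
    (∀ v, Continuous (Φ v)) → (∀ v c, IsCompact {x | Φ v x ≤ c}) →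
    ∃ σ : V → X, Measurable σ ∧ ∀ v, σ v ∈ minimizers (Φ v)

namespace HasMeasurableMinimizers

theorem of_subsingleton {X : Type*} [TopologicalSpace X] [MeasurableSpace X] [Nonempty X]
    [Subsingleton X] : HasMeasurableMinimizers.{u} X :=
  fun _ _ _ _ _ _ => ⟨fun _ => Classical.arbitrary X, measurable_const,
    fun _ x => (Subsingleton.elim (Classical.arbitrary X) x ▸ le_rfl)⟩

theorem of_homeomorph {X Y : Type*} [TopologicalSpace X] [MeasurableSpace X]
    [OpensMeasurableSpace X] [TopologicalSpace Y] [MeasurableSpace Y] [BorelSpace Y]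
    (hX : HasMeasurableMinimizers.{u} X) (e : X ≃ₜ Y) : HasMeasurableMinimizers.{u} Y := by
  intro V _ Φ hmeas hcont hK
  obtain ⟨σ, hσ, hmin⟩ := hX V (fun v x => Φ v (e x)) (fun x => hmeas (e x))
    (fun v => (hcont v).comp e.continuous) (fun v c => e.isCompact_preimage.2 (hK v c))
  exact ⟨fun v => e (σ v), e.continuous.measurable.comp hσ,
    fun v y => e.apply_symm_apply y ▸ hmin v (e.symm y)⟩

theorem real_prod {Y : Type*} [TopologicalSpace Y] [MetrizableSpace Y] [SecondCountableTopology Y]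
    [MeasurableSpace Y] [BorelSpace Y] [Nonempty Y] (hY : HasMeasurableMinimizers.{u} Y) :
    HasMeasurableMinimizers.{u} (ℝ × Y) := by
  intro V _ Φ hmeas hcont hK
  set t : V → ℝ := fun v => sInf (Prod.fst '' minimizers (Φ v))
  have ht : Measurable t := measurable_sInf_image_minimizers hmeas hcont hK continuous_fst
  have hΦ : Measurable (Function.uncurry fun x v => Φ v x) :=
    measurable_uncurry_of_continuous_of_measurable hcont hmeas
  obtain ⟨σ, hσ, hmin⟩ := hY V (fun v y => Φ v (t v, y))
    (fun y => hΦ.comp ((ht.prodMk measurable_const).prodMk measurable_id))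
    (fun v => (hcont v).comp (.prodMk_right (t v)))
    (fun v c => ((hK v c).image continuous_snd).of_isClosed_subset
      (isClosed_le ((hcont v).comp (.prodMk_right (t v))) continuous_const)
      fun y hy => ⟨(t v, y), hy, rfl⟩)
  refine ⟨fun v => (t v, σ v), ht.prodMk hσ, fun v x => ?_⟩
  obtain ⟨x₀, hx₀, hx₀t⟩ := ((isCompact_minimizers (hcont v) (hK v)).image continuous_fst).sInf_mem
    ((nonempty_minimizers (hcont v) (hK v)).image Prod.fst)
  calc Φ v (t v, σ v) ≤ Φ v (t v, x₀.2) := hmin v x₀.2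
    _ = Φ v x₀ := congrArg (Φ v) (Prod.ext hx₀t.symm rfl)
    _ ≤ Φ v x := hx₀ x

end HasMeasurableMinimizers

theorem hasMeasurableMinimizers_of_finiteDimensional (E : Type*) [NormedAddCommGroup E]
    [NormedSpace ℝ E] [FiniteDimensional ℝ E] [MeasurableSpace E] [BorelSpace E] :
    HasMeasurableMinimizers.{u} E := by
  have hFin : ∀ n, HasMeasurableMinimizers.{u} (Fin n → ℝ) := by
    intro n
    induction n with
    | zero => exact .of_subsingleton
    | succ n ih =>
      exact ih.real_prod.of_homeomorph
        (ContinuousLinearEquiv.ofFinrankEq (𝕜 := ℝ) (E := ℝ × (Fin n → ℝ)) (F := Fin (n + 1) → ℝ)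
          (by simp [add_comm])).toHomeomorph
  exact (hFin (Module.finrank ℝ E)).of_homeomorph
    (ContinuousLinearEquiv.ofFinrankEq (𝕜 := ℝ) (F := E) (by simp)).toHomeomorph

theorem isCompact_sublevel_of_coercive {E : Type*} [NormedAddCommGroup E] [ProperSpace E]
    {f : E → ℝ} (hf : Continuous f) {α β p : ℝ} (hα : 0 < α) (hp : 0 < p)
    (hcoer : ∀ x, α * ‖x‖ ^ p - β ≤ f x) (c : ℝ) : IsCompact {x | f x ≤ c} := by
  refine Metric.isCompact_of_isClosed_isBounded (isClosed_le hf continuous_const)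
    ((Metric.isBounded_iff_subset_closedBall 0).2 ⟨(max ((c + β) / α) 0) ^ p⁻¹, fun x hx => ?_⟩)
  rw [Metric.mem_closedBall, dist_zero_right,
    Real.le_rpow_inv_iff_of_pos (norm_nonneg x) (le_max_right _ _) hp, le_max_iff, le_div_iff₀ hα]
  exact Or.inl (by linarith [hcoer x, mul_comm α (‖x‖ ^ p), show f x ≤ c from hx])

theorem MemLp.of_norm_rpow_le_add {α E F : Type*} {m : MeasurableSpace α} {μ : Measure α}
    [IsFiniteMeasure μ] [NormedAddCommGroup E] [NormedAddCommGroup F] {f : α → E} {g : α → F}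
    {p A B : ℝ} (hp : 0 < p) (hg : MemLp g (ENNReal.ofReal p) μ) (hf : AEStronglyMeasurable f μ)
    (hfg : ∀ᵐ x ∂μ, ‖f x‖ ^ p ≤ A + B * ‖g x‖ ^ p) : MemLp f (ENNReal.ofReal p) μ := by
  have hp0 : ENNReal.ofReal p ≠ 0 := by simpa using hp
  have hpp : (ENNReal.ofReal p).toReal = p := ENNReal.toReal_ofReal hp.le
  have hg1 : MemLp (fun x => A + B * ‖g x‖ ^ p) 1 μ := by
    refine (memLp_const A).add (MemLp.const_mul ?_ B)
    simpa only [hpp] using hg.norm_rpow hp0 ENNReal.ofReal_ne_top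
  have hf1 : MemLp (fun x => ‖f x‖ ^ p) 1 μ := by
    refine hg1.of_le (hf.norm.aemeasurable.pow_const p).aestronglyMeasurable ?_
    filter_upwards [hfg] with x hx
    rw [Real.norm_of_nonneg (by positivity)]
    exact hx.trans (le_abs_self _)
  rw [← memLp_norm_rpow_iff hf hp0 ENNReal.ofReal_ne_top, hpp,
    ENNReal.div_self hp0 ENNReal.ofReal_ne_top]
  exact hf1

section Juxtaposition

variable {m k : ℕ}

theorem norm_juxt (q : Fin (m + k) → Fin m → ℝ) (r : Fin (m + k) → Fin k → ℝ) :
    ‖juxt m k q r‖ = max ‖q‖ ‖r‖ := by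
  refine le_antisymm ((pi_norm_le_iff_of_nonneg (by positivity)).2 fun i =>
    (pi_norm_le_iff_of_nonneg (by positivity)).2 ?_) (max_le ?_ ?_)
  · rintro (j | j)
    · exact (norm_le_pi_norm (q i) j).trans ((norm_le_pi_norm q i).trans (le_max_left _ _))
    · exact (norm_le_pi_norm (r i) j).trans ((norm_le_pi_norm r i).trans (le_max_right _ _))
  · refine (pi_norm_le_iff_of_nonneg (norm_nonneg _)).2 fun i =>
      (pi_norm_le_iff_of_nonneg (norm_nonneg _)).2 fun j => ?_
    exact (norm_le_pi_norm (juxt m k q r i) (Sum.inl j)).trans (norm_le_pi_norm _ i)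
  · refine (pi_norm_le_iff_of_nonneg (norm_nonneg _)).2 fun i =>
      (pi_norm_le_iff_of_nonneg (norm_nonneg _)).2 fun j => ?_
    exact (norm_le_pi_norm (juxt m k q r i) (Sum.inr j)).trans (norm_le_pi_norm _ i)

theorem norm_le_norm_juxt (q : Fin (m + k) → Fin m → ℝ) (r : Fin (m + k) → Fin k → ℝ) :
    ‖r‖ ≤ ‖juxt m k q r‖ :=
  norm_juxt q r ▸ le_max_right _ _

theorem norm_juxt_zero (q : Fin (m + k) → Fin m → ℝ) : ‖juxt m k q 0‖ = ‖q‖ := by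
  rw [norm_juxt, norm_zero, max_eq_left (norm_nonneg q)]

theorem continuous_juxt :
    Continuous fun qr : (Fin (m + k) → Fin m → ℝ) × (Fin (m + k) → Fin k → ℝ) =>
      juxt m k qr.1 qr.2 :=
  continuous_pi fun i => continuous_pi fun
    | .inl j => (continuous_apply_apply i j).comp continuous_fst
    | .inr j => (continuous_apply_apply i j).comp continuous_snd

end Juxtaposition

theorem norm_rpow_le_of_juxt_le_juxt_zero {m k : ℕ} {W : (Fin (m + k) → Fin m ⊕ Fin k → ℝ) → ℝ}
    {α β C p : ℝ} (hα : 0 < α) (hp : 0 ≤ p) (hcoer : ∀ Q, α * ‖Q‖ ^ p - β ≤ W Q)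
    (hgrowth : ∀ Q, |W Q| ≤ C * (1 + ‖Q‖ ^ p)) {q : Fin (m + k) → Fin m → ℝ}
    {r : Fin (m + k) → Fin k → ℝ} (h : W (juxt m k q r) ≤ W (juxt m k q 0)) :
    ‖r‖ ^ p ≤ (β + C) / α + C / α * ‖q‖ ^ p := by
  have hW0 := (le_abs_self _).trans (hgrowth (juxt m k q 0))
  rw [norm_juxt_zero] at hW0
  rw [show (β + C) / α + C / α * ‖q‖ ^ p = (β + C * (1 + ‖q‖ ^ p)) / α by ring, le_div_iff₀ hα]
  calc ‖r‖ ^ p * α ≤ ‖juxt m k q r‖ ^ p * α := by gcongr; exact norm_le_norm_juxt q r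
    _ ≤ β + C * (1 + ‖q‖ ^ p) := by linarith [hcoer (juxt m k q r)]

theorem stmt13_general (d m k : ℕ) (W : (Fin (m + k) → Fin m ⊕ Fin k → ℝ) → ℝ)
    (hWcont : Continuous W)
    (α β C p : ℝ) (hα : 0 < α) (hp : 1 < p)
    (hcoer : ∀ Q, α * ‖Q‖ ^ p - β ≤ W Q)
    (hgrowth : ∀ Q, |W Q| ≤ C * (1 + ‖Q‖ ^ p))
    (Ω : Set (Fin d → ℝ)) (hΩbdd : Bornology.IsBounded Ω)
    (G : (Fin d → ℝ) → (Fin (m + k) → Fin m → ℝ)) (hGmeas : Measurable G)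
    (hGLp : MemLp G (ENNReal.ofReal p) (volume.restrict Ω)) :
    ∃ r₀ : (Fin d → ℝ) → (Fin (m + k) → Fin k → ℝ), Measurable r₀ ∧
      MemLp r₀ (ENNReal.ofReal p) (volume.restrict Ω) ∧
      ∀ᵐ x ∂(volume.restrict Ω), ∀ r : Fin (m + k) → Fin k → ℝ,
        W (juxt m k (G x) (r₀ x)) ≤ W (juxt m k (G x) r) := by
  have hp₀ : 0 < p := zero_lt_one.trans hp
  have : IsFiniteMeasure (volume.restrict Ω) :=
    isFiniteMeasure_restrict.2 hΩbdd.measure_lt_top.ne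
  have hWq : ∀ q, Continuous fun r => W (juxt m k q r) :=
    fun q => hWcont.comp (continuous_juxt.comp (.prodMk_right q))
  have hcoer_r : ∀ q r, α * ‖r‖ ^ p - β ≤ W (juxt m k q r) := fun q r =>
    (hcoer _).trans' (by gcongr; exact norm_le_norm_juxt q r)
  obtain ⟨r₀, hr₀, hmin⟩ := hasMeasurableMinimizers_of_finiteDimensional
    (Fin (m + k) → Fin k → ℝ) (Fin d → ℝ) (fun x r => W (juxt m k (G x) r))
    (fun r => (hWcont.comp (continuous_juxt.comp (.prodMk_left r))).measurable.comp hGmeas)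
    (fun x => hWq (G x))
    (fun x => isCompact_sublevel_of_coercive (hWq (G x)) hα hp₀ (hcoer_r (G x)))
  refine ⟨r₀, hr₀, ?_, ae_of_all _ hmin⟩
  exact MemLp.of_norm_rpow_le_add hp₀ hGLp hr₀.aestronglyMeasurable
    (ae_of_all _ fun x => norm_rpow_le_of_juxt_le_juxt_zero hα hp₀.le hcoer hgrowth (hmin x 0))

/-- for `W` continuous with `p`-growth and `p`-coercivity and
`G ∈ L^p(Ω; ℝ^{n×(n−k)})` measurable on a bounded measurable `Ω`, there exists a
measurable `r₀ ∈ L^p(Ω; ℝ^{n×k})` with `W(G(x)|r₀(x)) = min_r W(G(x)|r)` a.e. -/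
theorem stmt13 (d m k : ℕ) (W : (Fin (m + k) → Fin m ⊕ Fin k → ℝ) → ℝ)
    (hWcont : Continuous W)
    (α β C p : ℝ) (hα : 0 < α) (hβ : 0 ≤ β) (hp : 1 < p)
    (hcoer : ∀ Q, α * ‖Q‖ ^ p - β ≤ W Q)
    (hgrowth : ∀ Q, |W Q| ≤ C * (1 + ‖Q‖ ^ p))
    (Ω : Set (Fin d → ℝ)) (hΩmeas : MeasurableSet Ω) (hΩbdd : Bornology.IsBounded Ω)
    (G : (Fin d → ℝ) → (Fin (m + k) → Fin m → ℝ)) (hGmeas : Measurable G)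
    (hGLp : MemLp G (ENNReal.ofReal p) (volume.restrict Ω)) :
    ∃ r₀ : (Fin d → ℝ) → (Fin (m + k) → Fin k → ℝ), Measurable r₀ ∧
      MemLp r₀ (ENNReal.ofReal p) (volume.restrict Ω) ∧
      ∀ᵐ x ∂(volume.restrict Ω), ∀ r : Fin (m + k) → Fin k → ℝ,
        W (juxt m k (G x) (r₀ x)) ≤ W (juxt m k (G x) r) :=
  stmt13_general d m k W hWcont α β C p hα hp hcoer hgrowth Ω hΩbdd G hGmeas hGLp
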